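/- arXiv:2001.03268 — 2 statements merged into one kernel-verified Lean document; each statement's English description precedes it below -/
import Mathlib

section
/- N_P^μ(λ)·H_N^μ(λ) equals the block column with k blocks that are all zero except the (μ+1)-st block, which equals P(λ); and G_N^μ(λ)·N_P^μ(λ) equals the block row with k blocks that are all zero except the (k−μ)-th block, which equals P(λ) (both identities holding for all λ). -/
open Polynomial Matrix

noncomputable section

/-- `gam x j` is the linear polynomial `γ_j(λ) = λ - x_j` (1-based node index). -/
def gam (x : ℕ → ℂ) (j : ℕ) : Polynomial ℂ := X - C (x j)

/-- `nij x i j` is the polynomial `n_i^j(λ) = ∏_{ℓ=i}^{j} γ_ℓ(λ)` (equal to `1` when `j < i`). -/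
def nij (x : ℕ → ℂ) (i j : ℕ) : Polynomial ℂ := ∏ l ∈ Finset.Icc i j, gam x l

/-- The matrix pencil `K_1^N(λ)`. -/
def K1N (k μ n : ℕ) (x : ℕ → ℂ) :
    Matrix (Fin (k - μ - 1) × Fin n) (Fin (k - μ) × Fin n) (Polynomial ℂ) :=
  Matrix.of fun p q =>
    (if (q.1 : ℕ) = (p.1 : ℕ) then -1
      else if (q.1 : ℕ) = (p.1 : ℕ) + 1 then gam x (k - 1 - (p.1 : ℕ)) else 0) *
    (if p.2 = q.2 then 1 else 0)

/-- The matrix pencil `K_2^N(λ)`. -/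
def K2N (μ m : ℕ) (x : ℕ → ℂ) :
    Matrix (Fin μ × Fin m) (Fin (μ + 1) × Fin m) (Polynomial ℂ) :=
  Matrix.of fun p q =>
    (if (q.1 : ℕ) = (p.1 : ℕ) then -1
      else if (q.1 : ℕ) = (p.1 : ℕ) + 1 then gam x (μ - (p.1 : ℕ)) else 0) *
    (if p.2 = q.2 then 1 else 0)

/-- `D_1^N(λ)^T`: block column with `k-μ` blocks, `i`-th block `n_{μ+1}^{k-i}(λ) I_n`. -/
def D1NT (k μ n : ℕ) (x : ℕ → ℂ) :
    Matrix (Fin (k - μ) × Fin n) (Fin n) (Polynomial ℂ) :=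
  Matrix.of fun p t => nij x (μ + 1) (k - 1 - (p.1 : ℕ)) * (if p.2 = t then 1 else 0)

/-- `D_2^N(λ)^T`: block column with `μ+1` blocks, `i`-th block `n_{μ+1-i}(λ) I_m`. -/
def D2NT (μ m : ℕ) (x : ℕ → ℂ) :
    Matrix (Fin (μ + 1) × Fin m) (Fin m) (Polynomial ℂ) :=
  Matrix.of fun p t => nij x 1 (μ - (p.1 : ℕ)) * (if p.2 = t then 1 else 0)

/-- The matrix polynomial `P(λ) = Σ_{i=0}^{k} P_i n_i(λ)` in the Newton basis. -/
def PmatN (k m n : ℕ) (x : ℕ → ℂ) (P : ℕ → Matrix (Fin m) (Fin n) ℂ) :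
    Matrix (Fin m) (Fin n) (Polynomial ℂ) :=
  ∑ i ∈ Finset.range (k + 1), nij x 1 i • (P i).map C

/-- The body `M_μ^N(λ)`: `(μ+1) × (k-μ)` block matrix with `(1,1)` block
`γ_k(λ)P_k + P_{k-1}`, `(1,j)` block `P_{k-j}` for `2 ≤ j ≤ k-μ`, `(i,k-μ)` block
`P_{μ+1-i}` for `2 ≤ i ≤ μ+1`, and zero blocks elsewhere (1-based block indices). -/
def MmuN (k μ m n : ℕ) (x : ℕ → ℂ) (P : ℕ → Matrix (Fin m) (Fin n) ℂ) :
    Matrix (Fin (μ + 1) × Fin m) (Fin (k - μ) × Fin n) (Polynomial ℂ) :=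
  Matrix.of fun p q =>
    if (p.1 : ℕ) = 0 ∧ (q.1 : ℕ) = 0 then
      gam x k * C (P k p.2 q.2) + C (P (k - 1) p.2 q.2)
    else if (p.1 : ℕ) = 0 then C (P (k - 1 - (q.1 : ℕ)) p.2 q.2)
    else if (q.1 : ℕ) = k - μ - 1 then C (P (μ - (p.1 : ℕ)) p.2 q.2)
    else 0

/-- The colleague Newton pencil `N_P^μ(λ) = [[M_μ^N(λ), K_2^N(λ)^T], [K_1^N(λ), 0]]`. -/
def NPmu (k μ m n : ℕ) (x : ℕ → ℂ) (P : ℕ → Matrix (Fin m) (Fin n) ℂ) :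
    Matrix ((Fin (μ + 1) × Fin m) ⊕ (Fin (k - μ - 1) × Fin n))
      ((Fin (k - μ) × Fin n) ⊕ (Fin μ × Fin m)) (Polynomial ℂ) :=
  Matrix.fromBlocks (MmuN k μ m n x P) (K2N μ m x).transpose (K1N k μ n x) 0

/-- The `i`-th Newton–Horner shift of `P`:
`P^i(λ) = Σ_{j=0}^{i} P_{k-j} n_{k+1-i}^{k-j}(λ)`. -/
def PhornerN (k m n : ℕ) (x : ℕ → ℂ) (P : ℕ → Matrix (Fin m) (Fin n) ℂ) (i : ℕ) :
    Matrix (Fin m) (Fin n) (Polynomial ℂ) :=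
  ∑ j ∈ Finset.range (i + 1), nij x (k + 1 - i) (k - j) • (P (k - j)).map C

/-- `H_N^μ(λ)`: block column with `k` blocks; the top `k-μ` blocks are those of
`D_1^N(λ)^T` and the remaining `μ` blocks are, from top to bottom,
`P^{k-μ}(λ), …, P^{k-1}(λ)`. -/
def HNmu (k μ m n : ℕ) (x : ℕ → ℂ) (P : ℕ → Matrix (Fin m) (Fin n) ℂ) :
    Matrix ((Fin (k - μ) × Fin n) ⊕ (Fin μ × Fin m)) (Fin n) (Polynomial ℂ) :=
  Matrix.of fun p t =>
    match p with
    | Sum.inl q => nij x (μ + 1) (k - 1 - (q.1 : ℕ)) * (if q.2 = t then 1 else 0)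
    | Sum.inr q => PhornerN k m n x P (k - μ + (q.1 : ℕ)) q.2 t

/-- `G_N^μ(λ)`: block row with `k` blocks; the first `μ+1` blocks are those of
`D_2^N(λ)` and the remaining `k-μ-1` blocks are, from left to right,
`n_μ(λ)P^1(λ), …, n_μ(λ)P^{k-μ-1}(λ)`. -/
def GNmu (k μ m n : ℕ) (x : ℕ → ℂ) (P : ℕ → Matrix (Fin m) (Fin n) ℂ) :
    Matrix (Fin m) ((Fin (μ + 1) × Fin m) ⊕ (Fin (k - μ - 1) × Fin n)) (Polynomial ℂ) :=
  Matrix.of fun s p =>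
    match p with
    | Sum.inl q => nij x 1 (μ - (q.1 : ℕ)) * (if s = q.2 then 1 else 0)
    | Sum.inr q => nij x 1 μ * PhornerN k m n x P ((q.1 : ℕ) + 1) s q.2


section Helpers
variable {k m n : ℕ} {x : ℕ → ℂ} {P : ℕ → Matrix (Fin m) (Fin n) ℂ}

lemma nij_empty (x : ℕ → ℂ) {i j : ℕ} (h : j < i) : nij x i j = 1 := by
  simp [nij, Finset.Icc_eq_empty_of_lt h]

lemma nij_top (x : ℕ → ℂ) {i j : ℕ} (h : i ≤ j + 1) :
    nij x i (j + 1) = nij x i j * gam x (j + 1) := by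
  simp [nij, Finset.prod_Icc_succ_top h]

lemma nij_bot (x : ℕ → ℂ) {i j : ℕ} (h : i ≤ j) :
    nij x i j = gam x i * nij x (i + 1) j := by
  rw [nij, nij, Finset.Icc_eq_cons_Ioc h, Finset.prod_cons, Finset.Icc_add_one_left_eq_Ioc]

lemma nij_peel (x : ℕ → ℂ) {i a b : ℕ} (hab : a = b + 1) (hi : i ≤ a) :
    nij x i a = nij x i b * gam x a := by
  subst hab; exact nij_top x hi

lemma Phorner_zero : PhornerN k m n x P 0 = (P k).map C := by
  simp [PhornerN, nij_empty x (Nat.lt_succ_self k)]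

lemma Phorner_succ {i : ℕ} (h : i < k) :
    PhornerN k m n x P (i + 1)
      = gam x (k - i) • PhornerN k m n x P i + (P (k - i - 1)).map C := by
  rw [PhornerN, PhornerN, Finset.sum_range_succ, Finset.smul_sum]
  congr 1
  · apply Finset.sum_congr rfl
    intro j hj
    rw [Finset.mem_range] at hj
    rw [smul_smul]
    congr 1
    have h1 : k + 1 - (i + 1) = k - i := by omega
    have h2 : k + 1 - i = (k - i) + 1 := by omega
    rw [h1, h2, nij_bot x (by omega : k - i ≤ k - j)]
  · have h1 : k + 1 - (i + 1) = k - i := by omega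
    have h2 : k - (i + 1) = k - i - 1 := by omega
    rw [h1, h2, nij_empty x (by omega), one_smul]

lemma Phorner_k : PhornerN k m n x P k = PmatN k m n x P := by
  rw [PhornerN, PmatN, ← Finset.sum_range_reflect]
  apply Finset.sum_congr rfl
  intro j hj
  rw [Finset.mem_range] at hj
  have h2 : k - (k + 1 - 1 - j) = j := by omega
  have h1 : k + 1 - k = 1 := by omega
  rw [h2, h1]

lemma Lkey {j : ℕ} (hj : j ≤ k) :
    nij x 1 j • PhornerN k m n x P (k - j)
      + ∑ i ∈ Finset.range j, nij x 1 i • (P i).map C = PmatN k m n x P := by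
  induction j with
  | zero => simp [nij_empty x (by omega : (0:ℕ) < 1), Nat.sub_zero, Phorner_k]
  | succ j ih =>
    have hjk : j ≤ k := by omega
    have hstep : PhornerN k m n x P (k - j)
        = gam x (j + 1) • PhornerN k m n x P (k - (j+1)) + (P j).map C := by
      have h1 : k - j = (k - (j+1)) + 1 := by omega
      have h2 : k - (k - (j + 1)) = j + 1 := by omega
      have h3 : j + 1 - 1 = j := by omega
      rw [h1, Phorner_succ (by omega : k - (j+1) < k), h2, h3]
    rw [← ih hjk, hstep, Finset.sum_range_succ]
    rw [smul_add, smul_smul, ← nij_top x (by omega : 1 ≤ j + 1)]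
    abel

lemma Phorner_apply (i : ℕ) (a : Fin m) (b : Fin n) :
    PhornerN k m n x P i a b
      = ∑ j ∈ Finset.range (i + 1), nij x (k + 1 - i) (k - j) * C (P (k - j) a b) := by
  simp [PhornerN, Matrix.sum_apply, Matrix.smul_apply, Matrix.map_apply, smul_eq_mul]

lemma Pmat_apply (a : Fin m) (b : Fin n) :
    PmatN k m n x P a b = ∑ i ∈ Finset.range (k + 1), nij x 1 i * C (P i a b) := by
  simp [PmatN, Matrix.sum_apply, Matrix.smul_apply, Matrix.map_apply, smul_eq_mul]

lemma Phorner_succ_apply {i : ℕ} (h : i < k) (a : Fin m) (b : Fin n) :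
    PhornerN k m n x P (i + 1) a b
      = gam x (k - i) * PhornerN k m n x P i a b + C (P (k - i - 1) a b) := by
  have := congrFun (congrFun (Phorner_succ (P := P) (x := x) h) a) b
  simpa [Matrix.add_apply, Matrix.smul_apply, Matrix.map_apply, smul_eq_mul] using this

lemma Phorner_one_apply (hk : 0 < k) (a : Fin m) (b : Fin n) :
    PhornerN k m n x P 1 a b = gam x k * C (P k a b) + C (P (k - 1) a b) := by
  have h := Phorner_succ_apply (P := P) (x := x) hk a b
  simp only [Nat.sub_zero] at h
  rw [h, Phorner_zero]
  simp [Matrix.map_apply]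

lemma Lkey_apply {j : ℕ} (hj : j ≤ k) (a : Fin m) (b : Fin n) :
    nij x 1 j * PhornerN k m n x P (k - j) a b
      + ∑ i ∈ Finset.range j, nij x 1 i * C (P i a b) = PmatN k m n x P a b := by
  have := congrFun (congrFun (Lkey (P := P) (x := x) hj) a) b
  simpa [Matrix.add_apply, Matrix.smul_apply, Matrix.map_apply, Matrix.sum_apply,
    smul_eq_mul] using this

lemma collapse {α β : Type*} [Fintype α] [DecidableEq α] [Fintype β]
    (f : β × α → Polynomial ℂ) (g : β → Polynomial ℂ) (t : α) :
    ∑ q : β × α, f q * (g q.1 * if q.2 = t then 1 else 0)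
      = ∑ q1 : β, f (q1, t) * g q1 := by
  rw [Fintype.sum_prod_type]
  simp [mul_ite, mul_one, mul_zero, Finset.sum_ite_eq']

lemma collapse2 {α β : Type*} [Fintype α] [DecidableEq α] [Fintype β]
    (f : β → Polynomial ℂ) (g : β × α → Polynomial ℂ) (t : α) :
    ∑ q : β × α, (f q.1 * if q.2 = t then 1 else 0) * g q
      = ∑ q1 : β, f q1 * g (q1, t) := by
  rw [Fintype.sum_prod_type]
  simp [mul_ite, ite_mul, mul_one, one_mul, mul_zero, zero_mul, Finset.sum_ite_eq']

lemma collapse2' {α β : Type*} [Fintype α] [DecidableEq α] [Fintype β]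
    (f : β → Polynomial ℂ) (g : β × α → Polynomial ℂ) (t : α) :
    ∑ q : β × α, (f q.1 * if t = q.2 then 1 else 0) * g q
      = ∑ q1 : β, f q1 * g (q1, t) := by
  rw [Fintype.sum_prod_type]
  simp [mul_ite, ite_mul, mul_one, one_mul, mul_zero, zero_mul, Finset.sum_ite_eq]

lemma collapse3 {α β : Type*} [Fintype α] [DecidableEq α] [Fintype β]
    (f g : β → Polynomial ℂ) (s u : α) :
    ∑ q : β × α, (f q.1 * if s = q.2 then 1 else 0) * (g q.1 * if q.2 = u then 1 else 0)
      = (if s = u then 1 else 0) * ∑ q1 : β, f q1 * g q1 := by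
  rw [Fintype.sum_prod_type]
  simp [mul_ite, ite_mul, mul_one, one_mul, mul_zero, zero_mul, Finset.sum_ite_eq,
    Finset.mul_sum, Finset.sum_mul, mul_comm, mul_left_comm]

lemma collapse3' {α β : Type*} [Fintype α] [DecidableEq α] [Fintype β]
    (f g : β → Polynomial ℂ) (s u : α) :
    ∑ q : β × α, (f q.1 * if s = q.2 then 1 else 0) * (g q.1 * if u = q.2 then 1 else 0)
      = (if s = u then 1 else 0) * ∑ q1 : β, f q1 * g q1 := by
  rw [Fintype.sum_prod_type]
  simp [mul_ite, ite_mul, mul_one, one_mul, mul_zero, zero_mul, Finset.sum_ite_eq,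
    Finset.mul_sum, Finset.sum_mul, mul_comm, mul_left_comm]

lemma ite_chain {p q : Prop} [Decidable p] [Decidable q] {A B : Polynomial ℂ}
    (h : ¬(p ∧ q)) :
    (if p then A else if q then B else 0)
      = (if p then A else 0) + (if q then B else 0) := by
  split_ifs <;> simp_all

lemma sum_fin_eq {N c : ℕ} (f : ℕ → Polynomial ℂ) :
    (∑ q : Fin N, if c = (q : ℕ) then f (q : ℕ) else 0)
      = if c < N then f c else 0 := by
  rw [Fin.sum_univ_eq_sum_range (fun j => if c = j then f j else 0)]
  simp [Finset.sum_ite_eq]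

lemma sum_fin_eq' {N c : ℕ} (f : ℕ → Polynomial ℂ) :
    (∑ q : Fin N, if (q : ℕ) = c then f (q : ℕ) else 0)
      = if c < N then f c else 0 := by
  rw [Fin.sum_univ_eq_sum_range (fun j => if j = c then f j else 0)]
  simp [Finset.sum_ite_eq']

lemma sum_fin_shift {N c : ℕ} (f : ℕ → Polynomial ℂ) :
    (∑ q : Fin N, if c = (q : ℕ) + 1 then f (q : ℕ) else 0)
      = if 1 ≤ c ∧ c - 1 < N then f (c - 1) else 0 := by
  rw [Fin.sum_univ_eq_sum_range (fun j => if c = j + 1 then f j else 0)]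
  rcases Nat.eq_zero_or_pos c with hc | hc
  · subst hc; simp
  · obtain ⟨d, rfl⟩ : ∃ d, c = d + 1 := ⟨c - 1, by omega⟩
    simp [Finset.sum_ite_eq, hc]

end Helpers

/-- One-sided factorizations of the colleague Newton pencil:
`N_P^μ(λ) H_N^μ(λ) = e_{μ+1} ⊗ P(λ)` and `G_N^μ(λ) N_P^μ(λ) = e_{k-μ}^T ⊗ P(λ)`. -/
theorem newton_one_sided_factorizations
    (k μ m n : ℕ) (hk : 2 ≤ k) (hμ : μ ≤ k - 1) (hm : 0 < m) (hn : 0 < n)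
    (x : ℕ → ℂ)
    (hx : ∀ i j : ℕ, 1 ≤ i → i ≤ k → 1 ≤ j → j ≤ k → x i = x j → i = j)
    (P : ℕ → Matrix (Fin m) (Fin n) ℂ) :
    NPmu k μ m n x P * HNmu k μ m n x P =
      (Matrix.of fun p t =>
        match p with
        | Sum.inl q => if (q.1 : ℕ) = μ then PmatN k m n x P q.2 t else 0
        | Sum.inr _ => 0) ∧
    GNmu k μ m n x P * NPmu k μ m n x P =
      (Matrix.of fun s p =>
        match p with
        | Sum.inl q => if (q.1 : ℕ) = k - μ - 1 then PmatN k m n x P s q.2 else 0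
        | Sum.inr _ => 0) := by
  have hμk : μ + 1 ≤ k := by omega
  constructor
  · rw [← Matrix.ext_iff]
    intro p t
    rw [Matrix.mul_apply, Fintype.sum_sum_type]
    rcases p with ⟨p1, p2⟩ | ⟨r1, r2⟩
    · simp only [NPmu, Matrix.fromBlocks_apply₁₁, Matrix.fromBlocks_apply₁₂, HNmu,
        Matrix.of_apply, Matrix.transpose_apply, K2N]
      rw [collapse (fun q => MmuN k μ m n x P (p1, p2) q)
        (fun j => nij x (μ + 1) (k - 1 - (j : ℕ))) t]
      rw [collapse2 (fun j : Fin μ => if (p1 : ℕ) = (j : ℕ) then -1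
          else if (p1 : ℕ) = (j : ℕ) + 1 then gam x (μ - (j : ℕ)) else 0)
        (fun q : Fin μ × Fin m => PhornerN k m n x P (k - μ + (q.1 : ℕ)) q.2 t) p2]
      have hp1le : (p1 : ℕ) ≤ μ := by omega
      have hS2 : (∑ q1 : Fin μ,
            (if (p1 : ℕ) = (q1 : ℕ) then -1
              else if (p1 : ℕ) = (q1 : ℕ) + 1 then gam x (μ - (q1 : ℕ)) else 0) *
              PhornerN k m n x P (k - μ + (q1 : ℕ)) p2 t)
          = (if (p1 : ℕ) < μ then -PhornerN k m n x P (k - μ + (p1 : ℕ)) p2 t else 0)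
            + (if 1 ≤ (p1 : ℕ) ∧ (p1 : ℕ) - 1 < μ then
                gam x (μ - ((p1 : ℕ) - 1)) *
                  PhornerN k m n x P (k - μ + ((p1 : ℕ) - 1)) p2 t else 0) := by
        have step : ∀ q1 : Fin μ,
            (if (p1 : ℕ) = (q1 : ℕ) then -1
              else if (p1 : ℕ) = (q1 : ℕ) + 1 then gam x (μ - (q1 : ℕ)) else 0) *
              PhornerN k m n x P (k - μ + (q1 : ℕ)) p2 t
            = (if (p1 : ℕ) = (q1 : ℕ) then
                  -PhornerN k m n x P (k - μ + (q1 : ℕ)) p2 t else 0)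
              + (if (p1 : ℕ) = (q1 : ℕ) + 1 then
                  gam x (μ - (q1 : ℕ)) * PhornerN k m n x P (k - μ + (q1 : ℕ)) p2 t
                else 0) := by
          intro q1
          split_ifs with hA hB hC <;> first | ring1 | omega
        rw [Finset.sum_congr rfl (fun q1 _ => step q1)]
        rw [Finset.sum_add_distrib,
          sum_fin_eq (fun j => -PhornerN k m n x P (k - μ + j) p2 t),
          sum_fin_shift (fun j => gam x (μ - j) * PhornerN k m n x P (k - μ + j) p2 t)]
      rw [hS2]
      rcases Nat.eq_zero_or_pos (p1 : ℕ) with h0 | h1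
      · have hS1 : (∑ q1 : Fin (k - μ),
              MmuN k μ m n x P (p1, p2) (q1, t) * nij x (μ + 1) (k - 1 - (q1 : ℕ)))
            = PhornerN k m n x P (k - μ) p2 t := by
          rw [Phorner_apply]
          have e1 : k + 1 - (k - μ) = μ + 1 := by omega
          rw [e1]
          simp only [MmuN, Matrix.of_apply, h0, true_and, if_true, eq_self_iff_true]
          rw [Fin.sum_univ_eq_sum_range (fun j =>
            (if j = 0 then gam x k * C (P k p2 t) + C (P (k - 1) p2 t)
              else C (P (k - 1 - j) p2 t)) * nij x (μ + 1) (k - 1 - j))]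
          obtain ⟨d, hd⟩ : ∃ d, k - μ = d + 1 := ⟨k - μ - 1, by omega⟩
          rw [hd]
          rw [Finset.sum_range_succ' _ d, Finset.sum_range_succ' _ (d + 1),
            Finset.sum_range_succ' _ d]
          have hterm : ∀ j ∈ Finset.range d,
              (if j + 1 = 0 then gam x k * C (P k p2 t) + C (P (k - 1) p2 t)
                else C (P (k - 1 - (j + 1)) p2 t)) * nij x (μ + 1) (k - 1 - (j + 1))
              = nij x (μ + 1) (k - (j + 1 + 1)) * C (P (k - (j + 1 + 1)) p2 t) := by
            intro j _
            have e2 : k - 1 - (j + 1) = k - (j + 1 + 1) := by omega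
            rw [if_neg (by omega), e2, mul_comm]
          rw [Finset.sum_congr rfl hterm]
          have e3 : k - 1 - 0 = k - 1 := by omega
          have e4 : k - 0 = k := by omega
          have e5 : k - (0 + 1) = k - 1 := by omega
          rw [if_pos rfl, e3, e4, e5,
            nij_peel x (show k = (k - 1) + 1 by omega) (by omega)]
          ring
        rw [hS1, h0]
        by_cases hμ0 : μ = 0
        · subst hμ0
          rw [if_pos rfl, Nat.sub_zero, Phorner_k]
          simp
        · rw [if_pos (by omega : 0 < μ), if_neg (by omega), if_neg (by omega),
            Nat.add_zero]
          ring
      · have hS1 : (∑ q1 : Fin (k - μ),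
              MmuN k μ m n x P (p1, p2) (q1, t) * nij x (μ + 1) (k - 1 - (q1 : ℕ)))
            = C (P (μ - (p1 : ℕ)) p2 t) := by
          have hentry : ∀ q1 : Fin (k - μ),
              MmuN k μ m n x P (p1, p2) (q1, t) * nij x (μ + 1) (k - 1 - (q1 : ℕ))
              = if (q1 : ℕ) = k - μ - 1 then
                  C (P (μ - (p1 : ℕ)) p2 t) * nij x (μ + 1) (k - 1 - (q1 : ℕ)) else 0 := by
            intro q1
            simp only [MmuN, Matrix.of_apply]
            rw [if_neg (by omega), if_neg (by omega), ite_mul, zero_mul]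
          rw [Finset.sum_congr rfl (fun q1 _ => hentry q1),
            sum_fin_eq' (fun j => C (P (μ - (p1 : ℕ)) p2 t) * nij x (μ + 1) (k - 1 - j)),
            if_pos (by omega : k - μ - 1 < k - μ)]
          have e1 : k - 1 - (k - μ - 1) = μ := by omega
          rw [e1, nij_empty x (by omega), mul_one]
        rw [hS1, if_pos (⟨h1, by omega⟩ : 1 ≤ (p1 : ℕ) ∧ (p1 : ℕ) - 1 < μ)]
        have key : gam x (μ - ((p1 : ℕ) - 1)) *
              PhornerN k m n x P (k - μ + ((p1 : ℕ) - 1)) p2 t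
              + C (P (μ - (p1 : ℕ)) p2 t)
            = PhornerN k m n x P (k - μ + (p1 : ℕ)) p2 t := by
          have h2 : k - μ + (p1 : ℕ) = (k - μ + ((p1 : ℕ) - 1)) + 1 := by omega
          have h3 : k - (k - μ + ((p1 : ℕ) - 1)) = μ - ((p1 : ℕ) - 1) := by omega
          have h4 : μ - ((p1 : ℕ) - 1) - 1 = μ - (p1 : ℕ) := by omega
          rw [h2, Phorner_succ_apply (by omega) p2 t, h3, h4]
        by_cases hμeq : (p1 : ℕ) = μ
        · rw [if_neg (by omega), if_pos hμeq]
          have e2 : k - μ + (p1 : ℕ) = k := by omega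
          rw [e2] at key
          rw [Phorner_k] at key
          linear_combination key
        · rw [if_pos (by omega), if_neg hμeq]
          linear_combination key
    · simp only [NPmu, Matrix.fromBlocks_apply₂₁, Matrix.fromBlocks_apply₂₂, HNmu,
        Matrix.of_apply, K1N, Matrix.zero_apply, zero_mul, Finset.sum_const_zero,
        add_zero]
      rw [collapse3 (fun j : Fin (k - μ) => if (j : ℕ) = (r1 : ℕ) then -1
          else if (j : ℕ) = (r1 : ℕ) + 1 then gam x (k - 1 - (r1 : ℕ)) else 0)
        (fun j : Fin (k - μ) => nij x (μ + 1) (k - 1 - (j : ℕ))) r2 t]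
      have hzero : (∑ q1 : Fin (k - μ),
            (if (q1 : ℕ) = (r1 : ℕ) then -1
              else if (q1 : ℕ) = (r1 : ℕ) + 1 then gam x (k - 1 - (r1 : ℕ)) else 0) *
            nij x (μ + 1) (k - 1 - (q1 : ℕ))) = 0 := by
        have step : ∀ q1 : Fin (k - μ),
            (if (q1 : ℕ) = (r1 : ℕ) then -1
              else if (q1 : ℕ) = (r1 : ℕ) + 1 then gam x (k - 1 - (r1 : ℕ)) else 0) *
              nij x (μ + 1) (k - 1 - (q1 : ℕ))
            = (if (q1 : ℕ) = (r1 : ℕ) then -nij x (μ + 1) (k - 1 - (q1 : ℕ)) else 0)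
              + (if (q1 : ℕ) = (r1 : ℕ) + 1 then
                  gam x (k - 1 - (r1 : ℕ)) * nij x (μ + 1) (k - 1 - (q1 : ℕ)) else 0) := by
          intro q1
          split_ifs with hA hB hC <;> first | ring1 | omega
        rw [Finset.sum_congr rfl (fun q1 _ => step q1)]
        rw [Finset.sum_add_distrib,
          sum_fin_eq' (fun j => -nij x (μ + 1) (k - 1 - j)),
          sum_fin_eq' (fun j => gam x (k - 1 - (r1 : ℕ)) * nij x (μ + 1) (k - 1 - j))]
        rw [if_pos (by omega : (r1 : ℕ) < k - μ), if_pos (by omega : (r1 : ℕ) + 1 < k - μ)]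
        have e1 : k - 1 - ((r1 : ℕ) + 1) = k - 1 - (r1 : ℕ) - 1 := by omega
        rw [e1, nij_peel x (show k - 1 - (r1 : ℕ) = (k - 1 - (r1 : ℕ) - 1) + 1 by omega)
          (by omega)]
        ring
      rw [hzero, mul_zero]
  · rw [← Matrix.ext_iff]
    intro s p
    rw [Matrix.mul_apply, Fintype.sum_sum_type]
    rcases p with ⟨c1, t⟩ | ⟨c1, t⟩
    · simp only [NPmu, Matrix.fromBlocks_apply₁₁, Matrix.fromBlocks_apply₂₁, GNmu,
        Matrix.of_apply, K1N]
      rw [collapse2' (fun j : Fin (μ + 1) => nij x 1 (μ - (j : ℕ)))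
        (fun q : Fin (μ + 1) × Fin m => MmuN k μ m n x P q (c1, t)) s]
      rw [collapse (fun q : Fin (k - μ - 1) × Fin n =>
          nij x 1 μ * PhornerN k m n x P ((q.1 : ℕ) + 1) s q.2)
        (fun j : Fin (k - μ - 1) => if (c1 : ℕ) = (j : ℕ) then -1
          else if (c1 : ℕ) = (j : ℕ) + 1 then gam x (k - 1 - (j : ℕ)) else 0) t]
      have hT2 : (∑ q1 : Fin (k - μ - 1),
            (nij x 1 μ * PhornerN k m n x P ((q1 : ℕ) + 1) s t) *
              (if (c1 : ℕ) = (q1 : ℕ) then -1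
                else if (c1 : ℕ) = (q1 : ℕ) + 1 then gam x (k - 1 - (q1 : ℕ)) else 0))
          = (if (c1 : ℕ) < k - μ - 1 then
                -(nij x 1 μ * PhornerN k m n x P ((c1 : ℕ) + 1) s t) else 0)
            + (if 1 ≤ (c1 : ℕ) ∧ (c1 : ℕ) - 1 < k - μ - 1 then
                (nij x 1 μ * PhornerN k m n x P (((c1 : ℕ) - 1) + 1) s t) *
                  gam x (k - 1 - ((c1 : ℕ) - 1)) else 0) := by
        have step : ∀ q1 : Fin (k - μ - 1),
            (nij x 1 μ * PhornerN k m n x P ((q1 : ℕ) + 1) s t) *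
              (if (c1 : ℕ) = (q1 : ℕ) then -1
                else if (c1 : ℕ) = (q1 : ℕ) + 1 then gam x (k - 1 - (q1 : ℕ)) else 0)
            = (if (c1 : ℕ) = (q1 : ℕ) then
                  -(nij x 1 μ * PhornerN k m n x P ((q1 : ℕ) + 1) s t) else 0)
              + (if (c1 : ℕ) = (q1 : ℕ) + 1 then
                  (nij x 1 μ * PhornerN k m n x P ((q1 : ℕ) + 1) s t) *
                    gam x (k - 1 - (q1 : ℕ)) else 0) := by
          intro q1
          split_ifs with hA hB hC <;> first | ring1 | omega
        rw [Finset.sum_congr rfl (fun q1 _ => step q1)]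
        rw [Finset.sum_add_distrib,
          sum_fin_eq (fun j => -(nij x 1 μ * PhornerN k m n x P (j + 1) s t)),
          sum_fin_shift (fun j =>
            (nij x 1 μ * PhornerN k m n x P (j + 1) s t) * gam x (k - 1 - j))]
      rw [hT2]
      by_cases hc : (c1 : ℕ) = k - μ - 1
      · rw [if_pos hc, if_neg (by omega)]
        by_cases hμtop : μ = k - 1
        · have hc0 : (c1 : ℕ) = 0 := by omega
          rw [if_neg (by omega), add_zero, add_zero]
          have hent : ∀ p1 : Fin (μ + 1),
              nij x 1 (μ - (p1 : ℕ)) * MmuN k μ m n x P (p1, s) (c1, t)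
              = nij x 1 (μ - (p1 : ℕ)) *
                (if (p1 : ℕ) = 0 then gam x k * C (P k s t) + C (P (k - 1) s t)
                  else C (P (μ - (p1 : ℕ)) s t)) := by
            intro p1
            simp only [MmuN, Matrix.of_apply, hc0, eq_self_iff_true, and_true]
            by_cases hp : (p1 : ℕ) = 0
            · rw [if_pos hp, if_pos hp]
            · rw [if_neg (by tauto), if_neg hp, if_neg hp, if_pos (by omega)]
          rw [Finset.sum_congr rfl (fun p1 _ => hent p1)]
          rw [Fin.sum_univ_eq_sum_range (fun j => nij x 1 (μ - j) *
            (if j = 0 then gam x k * C (P k s t) + C (P (k - 1) s t)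
              else C (P (μ - j) s t)))]
          rw [Finset.sum_range_succ' _ μ]
          have hterm : ∀ j ∈ Finset.range μ,
              nij x 1 (μ - (j + 1)) *
                (if j + 1 = 0 then gam x k * C (P k s t) + C (P (k - 1) s t)
                  else C (P (μ - (j + 1)) s t))
              = nij x 1 (μ - 1 - j) * C (P (μ - 1 - j) s t) := by
            intro j hj
            rw [Finset.mem_range] at hj
            have e1 : μ - (j + 1) = μ - 1 - j := by omega
            rw [if_neg (by omega), e1]
          rw [Finset.sum_congr rfl hterm,
            Finset.sum_range_reflect (fun i => nij x 1 i * C (P i s t)) μ]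
          have hL := Lkey_apply (P := P) (x := x) (by omega : μ ≤ k) s t
          have e2 : k - μ = 1 := by omega
          rw [e2] at hL
          rw [Phorner_one_apply (by omega)] at hL
          rw [Nat.sub_zero, if_pos rfl]
          rw [← hL]
          ring
        · rw [if_pos (show 1 ≤ (c1 : ℕ) ∧ (c1 : ℕ) - 1 < k - μ - 1 by omega), zero_add]
          have hent : ∀ p1 : Fin (μ + 1),
              nij x 1 (μ - (p1 : ℕ)) * MmuN k μ m n x P (p1, s) (c1, t)
              = nij x 1 (μ - (p1 : ℕ)) * C (P (μ - (p1 : ℕ)) s t) := by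
            intro p1
            simp only [MmuN, Matrix.of_apply]
            by_cases hp : (p1 : ℕ) = 0
            · rw [if_neg (by omega), if_pos hp]
              have e1 : k - 1 - (c1 : ℕ) = μ := by omega
              rw [e1, hp, Nat.sub_zero]
            · rw [if_neg (by tauto), if_neg hp, if_pos hc]
          rw [Finset.sum_congr rfl (fun p1 _ => hent p1)]
          rw [Fin.sum_univ_eq_sum_range (fun j => nij x 1 (μ - j) * C (P (μ - j) s t))]
          have hterm : ∀ j ∈ Finset.range (μ + 1),
              nij x 1 (μ - j) * C (P (μ - j) s t)
              = nij x 1 (μ + 1 - 1 - j) * C (P (μ + 1 - 1 - j) s t) := by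
            intro j hj
            rw [Finset.mem_range] at hj
            have e1 : μ - j = μ + 1 - 1 - j := by omega
            rw [e1]
          rw [Finset.sum_congr rfl hterm,
            Finset.sum_range_reflect (fun i => nij x 1 i * C (P i s t)) (μ + 1),
            Finset.sum_range_succ]
          have hL := Lkey_apply (P := P) (x := x) (by omega : μ ≤ k) s t
          have key : PhornerN k m n x P (k - μ) s t
              = gam x (μ + 1) * PhornerN k m n x P (k - μ - 1) s t + C (P μ s t) := by
            have h2 : k - μ = (k - μ - 1) + 1 := by omega
            have h3 : k - (k - μ - 1) = μ + 1 := by omega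
            have h4 : μ + 1 - 1 = μ := by omega
            rw [h2, Phorner_succ_apply (by omega) s t, h3, h4, Nat.add_sub_cancel]
          have e5 : (c1 : ℕ) - 1 + 1 = k - μ - 1 := by omega
          have e6 : k - 1 - ((c1 : ℕ) - 1) = μ + 1 := by omega
          rw [e5, e6, ← hL, key]
          ring
      · rw [if_neg hc]
        by_cases hc0 : (c1 : ℕ) = 0
        · rw [if_pos (by omega), if_neg (by omega), add_zero]
          have hent : ∀ p1 : Fin (μ + 1),
              nij x 1 (μ - (p1 : ℕ)) * MmuN k μ m n x P (p1, s) (c1, t)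
              = if (p1 : ℕ) = 0 then
                  nij x 1 μ * (gam x k * C (P k s t) + C (P (k - 1) s t)) else 0 := by
            intro p1
            simp only [MmuN, Matrix.of_apply]
            by_cases hp : (p1 : ℕ) = 0
            · rw [if_pos ⟨hp, hc0⟩, if_pos hp, hp, Nat.sub_zero]
            · rw [if_neg (by tauto), if_neg hp, if_neg hc, mul_zero]
              exact (if_neg hp).symm
          rw [Finset.sum_congr rfl (fun p1 _ => hent p1),
            sum_fin_eq' (fun j => nij x 1 μ * (gam x k * C (P k s t) + C (P (k - 1) s t))),
            if_pos (by omega : 0 < μ + 1)]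
          rw [hc0, Phorner_one_apply (by omega : 0 < k) s t]
          ring
        · rw [if_pos (by omega), if_pos (show 1 ≤ (c1 : ℕ) ∧ (c1 : ℕ) - 1 < k - μ - 1
            by omega)]
          have hent : ∀ p1 : Fin (μ + 1),
              nij x 1 (μ - (p1 : ℕ)) * MmuN k μ m n x P (p1, s) (c1, t)
              = if (p1 : ℕ) = 0 then
                  nij x 1 μ * C (P (k - 1 - (c1 : ℕ)) s t) else 0 := by
            intro p1
            simp only [MmuN, Matrix.of_apply]
            by_cases hp : (p1 : ℕ) = 0
            · rw [if_neg (by tauto), if_pos hp, if_pos hp, hp, Nat.sub_zero]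
            · rw [if_neg (by tauto), if_neg hp, if_neg hc, mul_zero]
              exact (if_neg hp).symm
          rw [Finset.sum_congr rfl (fun p1 _ => hent p1),
            sum_fin_eq' (fun j => nij x 1 μ * C (P (k - 1 - (c1 : ℕ)) s t)),
            if_pos (by omega : 0 < μ + 1)]
          have key : PhornerN k m n x P ((c1 : ℕ) + 1) s t
              = gam x (k - (c1 : ℕ)) * PhornerN k m n x P (c1 : ℕ) s t
                + C (P (k - (c1 : ℕ) - 1) s t) := by
            exact Phorner_succ_apply (by omega) s t
          have e5 : (c1 : ℕ) - 1 + 1 = (c1 : ℕ) := by omega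
          have e6 : k - 1 - ((c1 : ℕ) - 1) = k - (c1 : ℕ) := by omega
          have e7 : k - (c1 : ℕ) - 1 = k - 1 - (c1 : ℕ) := by omega
          rw [e5, e6, key, e7]
          ring
    · simp only [NPmu, Matrix.fromBlocks_apply₁₂, Matrix.fromBlocks_apply₂₂, GNmu,
        Matrix.of_apply, Matrix.transpose_apply, K2N, Matrix.zero_apply, mul_zero,
        Finset.sum_const_zero, add_zero]
      rw [collapse3' (fun j : Fin (μ + 1) => nij x 1 (μ - (j : ℕ)))
        (fun j : Fin (μ + 1) => if (j : ℕ) = (c1 : ℕ) then -1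
          else if (j : ℕ) = (c1 : ℕ) + 1 then gam x (μ - (c1 : ℕ)) else 0) s t]
      have hzero : (∑ q1 : Fin (μ + 1),
            nij x 1 (μ - (q1 : ℕ)) *
            (if (q1 : ℕ) = (c1 : ℕ) then -1
              else if (q1 : ℕ) = (c1 : ℕ) + 1 then gam x (μ - (c1 : ℕ)) else 0)) = 0 := by
        have step : ∀ q1 : Fin (μ + 1),
            nij x 1 (μ - (q1 : ℕ)) *
              (if (q1 : ℕ) = (c1 : ℕ) then -1
                else if (q1 : ℕ) = (c1 : ℕ) + 1 then gam x (μ - (c1 : ℕ)) else 0)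
            = (if (q1 : ℕ) = (c1 : ℕ) then -nij x 1 (μ - (q1 : ℕ)) else 0)
              + (if (q1 : ℕ) = (c1 : ℕ) + 1 then
                  nij x 1 (μ - (q1 : ℕ)) * gam x (μ - (c1 : ℕ)) else 0) := by
          intro q1
          split_ifs with hA hB hC <;> first | ring1 | omega
        rw [Finset.sum_congr rfl (fun q1 _ => step q1)]
        rw [Finset.sum_add_distrib,
          sum_fin_eq' (fun j => -nij x 1 (μ - j)),
          sum_fin_eq' (fun j => nij x 1 (μ - j) * gam x (μ - (c1 : ℕ)))]
        rw [if_pos (by omega : (c1 : ℕ) < μ + 1), if_pos (by omega : (c1 : ℕ) + 1 < μ + 1)]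
        have e1 : μ - ((c1 : ℕ) + 1) = μ - (c1 : ℕ) - 1 := by omega
        rw [e1, nij_peel x (show μ - (c1 : ℕ) = (μ - (c1 : ℕ) - 1) + 1 by omega)
          (by omega)]
        ring
      rw [hzero, mul_zero]
end
end

section
/- D_2^L(λ)·M_μ^L(λ)·D_1^L(λ)^T = P(λ) identically in λ, where D_1^L(λ) and D_2^L(λ) denote the block rows whose transposes are the block columns D_1^L(λ)^T and D_2^L(λ)^T. -/
open Polynomial Matrix

noncomputable section

/-- The barycentric weight `w_i = 1 / ∏_{j ≠ i, 1 ≤ j ≤ k+1} (x_i - x_j)`. -/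
def wbar (k : ℕ) (x : ℕ → ℂ) (i : ℕ) : ℂ :=
  (∏ j ∈ (Finset.Icc 1 (k + 1)).erase i, (x i - x j))⁻¹

/-- The matrix pencil `K_1^L(λ)`: `(k-μ-1) × (k-μ)` block matrix with `n × n` blocks,
`(i,i)` block `γ_{k+2-i}(λ) I_n`, `(i,i+1)` block `-γ_{k-i}(λ) I_n` (1-based). -/
def K1L (k μ n : ℕ) (x : ℕ → ℂ) :
    Matrix (Fin (k - μ - 1) × Fin n) (Fin (k - μ) × Fin n) (Polynomial ℂ) :=
  Matrix.of fun p q =>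
    (if (q.1 : ℕ) = (p.1 : ℕ) then gam x (k + 1 - (p.1 : ℕ))
      else if (q.1 : ℕ) = (p.1 : ℕ) + 1 then -gam x (k - 1 - (p.1 : ℕ)) else 0) *
    (if p.2 = q.2 then 1 else 0)

/-- The matrix pencil `K_2^L(λ)`: `μ × (μ+1)` block matrix with `m × m` blocks,
`(i,i)` block `γ_{μ+3-i}(λ) I_m`, `(i,i+1)` block `-γ_{μ+1-i}(λ) I_m` (1-based). -/
def K2L (μ m : ℕ) (x : ℕ → ℂ) :
    Matrix (Fin μ × Fin m) (Fin (μ + 1) × Fin m) (Polynomial ℂ) :=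
  Matrix.of fun p q =>
    (if (q.1 : ℕ) = (p.1 : ℕ) then gam x (μ + 2 - (p.1 : ℕ))
      else if (q.1 : ℕ) = (p.1 : ℕ) + 1 then -gam x (μ - (p.1 : ℕ)) else 0) *
    (if p.2 = q.2 then 1 else 0)

/-- `D_1^L(λ)^T`: block column with `k-μ` blocks whose `i`-th block (1-based) is
`(n_{μ+1}^{k+1}(λ)/(γ_{k+2-i}(λ)γ_{k+1-i}(λ))) I_n`, the quotient being the product of
the factors `γ_ℓ`, `μ+1 ≤ ℓ ≤ k+1`, with the two indicated factors deleted. -/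
def D1LT (k μ n : ℕ) (x : ℕ → ℂ) :
    Matrix (Fin (k - μ) × Fin n) (Fin n) (Polynomial ℂ) :=
  Matrix.of fun p t =>
    (∏ l ∈ ((Finset.Icc (μ + 1) (k + 1)).erase (k + 1 - (p.1 : ℕ))).erase (k - (p.1 : ℕ)),
        gam x l) *
    (if p.2 = t then 1 else 0)

/-- `D_2^L(λ)^T`: block column with `μ+1` blocks whose `i`-th block (1-based) is
`(n_1^{μ+2}(λ)/(γ_{μ+3-i}(λ)γ_{μ+2-i}(λ))) I_m`. -/
def D2LT (μ m : ℕ) (x : ℕ → ℂ) :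
    Matrix (Fin (μ + 1) × Fin m) (Fin m) (Polynomial ℂ) :=
  Matrix.of fun p t =>
    (∏ l ∈ ((Finset.Icc 1 (μ + 2)).erase (μ + 2 - (p.1 : ℕ))).erase (μ + 1 - (p.1 : ℕ)),
        gam x l) *
    (if p.2 = t then 1 else 0)

/-- The Lagrange interpolation matrix polynomial
`P(λ) = Σ_{i=1}^{k+1} w_i P_i ∏_{j ≠ i} (λ - x_j)`. -/
def PmatL (k m n : ℕ) (x : ℕ → ℂ) (P : ℕ → Matrix (Fin m) (Fin n) ℂ) :
    Matrix (Fin m) (Fin n) (Polynomial ℂ) :=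
  ∑ i ∈ Finset.Icc 1 (k + 1),
    (C (wbar k x i) * ∏ j ∈ (Finset.Icc 1 (k + 1)).erase i, gam x j) • (P i).map C

/-- The body `M_μ^L(λ)`: `(μ+1) × (k-μ)` block matrix with `(1,1)` block
`w_{k+1}γ_k(λ)P_{k+1} + w_kγ_{k+1}(λ)P_k`, `(1,j)` block `w_{k+1-j}γ_{k+2-j}(λ)P_{k+1-j}`
for `2 ≤ j ≤ k-μ`, `(i,k-μ)` block `w_{μ+2-i}γ_{μ+3-i}(λ)P_{μ+2-i}` for `2 ≤ i ≤ μ+1`,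
and zero blocks elsewhere (1-based block indices). -/
def MmuL (k μ m n : ℕ) (x : ℕ → ℂ) (P : ℕ → Matrix (Fin m) (Fin n) ℂ) :
    Matrix (Fin (μ + 1) × Fin m) (Fin (k - μ) × Fin n) (Polynomial ℂ) :=
  Matrix.of fun p q =>
    if (p.1 : ℕ) = 0 ∧ (q.1 : ℕ) = 0 then
      C (wbar k x (k + 1)) * gam x k * C (P (k + 1) p.2 q.2) +
        C (wbar k x k) * gam x (k + 1) * C (P k p.2 q.2)
    else if (p.1 : ℕ) = 0 then
      C (wbar k x (k - (q.1 : ℕ))) * gam x (k + 1 - (q.1 : ℕ)) * C (P (k - (q.1 : ℕ)) p.2 q.2)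
    else if (q.1 : ℕ) = k - μ - 1 then
      C (wbar k x (μ + 1 - (p.1 : ℕ))) * gam x (μ + 2 - (p.1 : ℕ)) *
        C (P (μ + 1 - (p.1 : ℕ)) p.2 q.2)
    else 0

/-- The colleague Lagrange pencil `L_P^μ(λ) = [[M_μ^L(λ), K_2^L(λ)^T], [K_1^L(λ), 0]]`. -/
def LPmu (k μ m n : ℕ) (x : ℕ → ℂ) (P : ℕ → Matrix (Fin m) (Fin n) ℂ) :
    Matrix ((Fin (μ + 1) × Fin m) ⊕ (Fin (k - μ - 1) × Fin n))
      ((Fin (k - μ) × Fin n) ⊕ (Fin μ × Fin m)) (Polynomial ℂ) :=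
  Matrix.fromBlocks (MmuL k μ m n x P) (K2L μ m x).transpose (K1L k μ n x) 0

/-!
Every block of `D_1^L` and `D_2^L` is a scalar multiple of the identity, so an entry of the
product is a double sum over block indices, and `M_μ^L` is supported on its first block row and
last block column. Each block there carries one node `v` as `w_v γ_a P_v`, and the scalar blocks
of `D_2^L` and `D_1^L` in that position contribute exactly the factors `γ_l`, `l ∉ {a, v}`, so the
term is the Lagrange term `w_v P_v ∏_{l ≠ v} γ_l`. The corner block yields the nodes `k + 1` and
`k`, the rest of the first row the nodes `μ + 1, …, k - 1`, the rest of the last column the nodes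
`1, …, μ`: every node occurs once.
-/

open Finset

def blockCol (m : Type*) [DecidableEq m] {R : Type*} [Semiring R] (a : ℕ → R) (K : ℕ) :
    Matrix (Fin K × m) m R :=
  of fun p t => a p.1 * if p.2 = t then 1 else 0

theorem blockCol_transpose_mul_mul_blockCol_apply {R m n : Type*} [CommSemiring R]
    [Fintype m] [Fintype n] [DecidableEq m] [DecidableEq n] {P K : ℕ} (a b : ℕ → R)
    (M : Matrix (Fin P × m) (Fin K × n) R) (H : ℕ → ℕ → R) {s : m} {t : n}
    (hM : ∀ (i : Fin P) (j : Fin K), M (i, s) (j, t) = H i j) :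
    ((blockCol m a P)ᵀ * M * blockCol n b K) s t
      = ∑ i ∈ range P, ∑ j ∈ range K, a i * H i j * b j := by
  simp only [mul_apply, transpose_apply, blockCol, of_apply, Fintype.sum_prod_type, mul_ite,
    mul_one, mul_zero, ite_mul, zero_mul, sum_ite_eq', mem_univ, if_true, sum_mul, hM]
  rw [sum_comm, Fin.sum_univ_eq_sum_range (fun i => ∑ j : Fin K, a i * H i j * b j)]
  exact sum_congr rfl fun i _ => Fin.sum_univ_eq_sum_range (fun j => a i * H i j * b j) K

theorem sum_range_sum_range_mul_mul_of_hook {R : Type*} [CommSemiring R] {P K : ℕ}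
    (hP : 0 < P) (hK : 0 < K) (a b : ℕ → R) (H : ℕ → ℕ → R)
    (hH : ∀ i j, i ≠ 0 → j ≠ K - 1 → H i j = 0) :
    ∑ i ∈ range P, ∑ j ∈ range K, a i * H i j * b j
      = ∑ j ∈ range K, a 0 * H 0 j * b j
        + ∑ i ∈ Ico 1 P, a i * H i (K - 1) * b (K - 1) := by
  rw [range_eq_Ico, sum_eq_sum_Ico_succ_bot hP]
  congr 1
  refine sum_congr rfl fun i hi =>
    sum_eq_single_of_mem (K - 1) (mem_range.2 (by omega)) fun j _ hj => ?_
  rw [hH i j (by rw [mem_Ico] at hi; omega) hj, mul_zero, zero_mul]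

theorem sum_Icc_one_eq_add_add_sum_Ico_add_sum_Ico {M : Type*} [AddCommMonoid M] (T : ℕ → M)
    {k μ : ℕ} (hμk : μ + 1 ≤ k) :
    ∑ v ∈ Icc 1 (k + 1), T v
      = T (k + 1) + T k + ∑ j ∈ Ico 1 (k - μ), T (k - j)
        + ∑ i ∈ Ico 1 (μ + 1), T (μ + 1 - i) := by
  rw [sum_Ico_reflect T 1 (by omega), sum_Ico_reflect T 1 (show μ + 1 ≤ μ + 1 + 1 by omega),
    show k + 1 - (k - μ) = μ + 1 by omega, show μ + 1 + 1 - (μ + 1) = 1 by omega,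
    Nat.add_sub_cancel, Nat.add_sub_cancel, ← Ico_add_one_right_eq_Icc,
    ← sum_Ico_consecutive T (show 1 ≤ μ + 1 by omega) (show μ + 1 ≤ k + 1 + 1 by omega),
    ← sum_Ico_consecutive T hμk (show k ≤ k + 1 + 1 by omega),
    sum_Ico_succ_top (show k ≤ k + 1 by omega), sum_Ico_succ_top (le_refl k), Ico_self, sum_empty]
  abel

theorem prod_mul_mul_prod_of_mem_iff {ι M : Type*} [CommMonoid M] [DecidableEq ι] (f : ι → M)
    {s t u : Finset ι} {a : ι} (hs : ∀ l ∈ s, l ≠ a ∧ l ∉ t) (hat : a ∉ t)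
    (hu : ∀ l, l ∈ u ↔ l ∈ s ∨ l = a ∨ l ∈ t) :
    (∏ l ∈ s, f l) * f a * ∏ l ∈ t, f l = ∏ l ∈ u, f l := by
  have hu' : u = s ∪ insert a t := by
    ext l
    simp only [hu, mem_union, mem_insert]
  have hdisj : Disjoint s (insert a t) :=
    disjoint_insert_right.2 ⟨fun ha => (hs a ha).1 rfl, disjoint_left.2 fun l hl => (hs l hl).2⟩
  rw [hu', prod_union hdisj, prod_insert hat, mul_assoc]

section LagrangeBlocks

variable (k μ : ℕ) (x : ℕ → ℂ)

def d2Block (i : ℕ) : ℂ[X] :=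
  ∏ l ∈ ((Icc 1 (μ + 2)).erase (μ + 2 - i)).erase (μ + 1 - i), gam x l

def d1Block (j : ℕ) : ℂ[X] :=
  ∏ l ∈ ((Icc (μ + 1) (k + 1)).erase (k + 1 - j)).erase (k - j), gam x l

def lagrangeNumerator (v : ℕ) : ℂ[X] :=
  ∏ l ∈ (Icc 1 (k + 1)).erase v, gam x l

def bodyEntry (p : ℕ → ℂ) (i j : ℕ) : ℂ[X] :=
  if i = 0 ∧ j = 0 then
    C (wbar k x (k + 1)) * gam x k * C (p (k + 1)) + C (wbar k x k) * gam x (k + 1) * C (p k)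
  else if i = 0 then C (wbar k x (k - j)) * gam x (k + 1 - j) * C (p (k - j))
  else if j = k - μ - 1 then C (wbar k x (μ + 1 - i)) * gam x (μ + 2 - i) * C (p (μ + 1 - i))
  else 0

theorem D2LT_eq_blockCol (m : ℕ) : D2LT μ m x = blockCol (Fin m) (d2Block μ x) (μ + 1) := rfl

theorem D1LT_eq_blockCol (n : ℕ) :
    D1LT k μ n x = blockCol (Fin n) (d1Block k μ x) (k - μ) := rfl

theorem MmuL_apply {m n : ℕ} (P : ℕ → Matrix (Fin m) (Fin n) ℂ) (i : Fin (μ + 1))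
    (s : Fin m) (j : Fin (k - μ)) (t : Fin n) :
    MmuL k μ m n x P (i, s) (j, t) = bodyEntry k μ x (fun v => P v s t) i j := rfl

theorem PmatL_apply {m n : ℕ} (P : ℕ → Matrix (Fin m) (Fin n) ℂ) (s : Fin m) (t : Fin n) :
    PmatL k m n x P s t
      = ∑ v ∈ Icc 1 (k + 1), C (wbar k x v) * lagrangeNumerator k x v * C (P v s t) := by
  simp [PmatL, Matrix.sum_apply, lagrangeNumerator]

variable {k μ}

theorem bodyEntry_eq_zero (p : ℕ → ℂ) {i j : ℕ} (hi : i ≠ 0) (hj : j ≠ k - μ - 1) :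
    bodyEntry k μ x p i j = 0 := by
  simp [bodyEntry, hi, hj]

theorem d2Block_zero_mul_gam_mul_d1Block_zero (hμk : μ + 1 ≤ k) :
    d2Block μ x 0 * gam x k * d1Block k μ x 0 = lagrangeNumerator k x (k + 1) := by
  refine prod_mul_mul_prod_of_mem_iff _ ?_ ?_ ?_ <;> intros <;>
    simp only [mem_erase, mem_Icc] at * <;> omega

theorem d2Block_zero_mul_gam_succ_mul_d1Block_zero (hμk : μ + 1 ≤ k) :
    d2Block μ x 0 * gam x (k + 1) * d1Block k μ x 0 = lagrangeNumerator k x k := by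
  refine prod_mul_mul_prod_of_mem_iff _ ?_ ?_ ?_ <;> intros <;>
    simp only [mem_erase, mem_Icc] at * <;> omega

theorem d2Block_zero_mul_gam_mul_d1Block {j : ℕ} (hj : j ∈ Ico 1 (k - μ)) :
    d2Block μ x 0 * gam x (k + 1 - j) * d1Block k μ x j = lagrangeNumerator k x (k - j) := by
  rw [mem_Ico] at hj
  refine prod_mul_mul_prod_of_mem_iff _ ?_ ?_ ?_ <;> intros <;>
    simp only [mem_erase, mem_Icc] at * <;> omega

theorem d2Block_mul_gam_mul_d1Block_last (hμk : μ + 1 ≤ k) {i : ℕ}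
    (hi : i ∈ Ico 1 (μ + 1)) :
    d2Block μ x i * gam x (μ + 2 - i) * d1Block k μ x (k - μ - 1)
      = lagrangeNumerator k x (μ + 1 - i) := by
  rw [mem_Ico] at hi
  refine prod_mul_mul_prod_of_mem_iff _ ?_ ?_ ?_ <;> intros <;>
    simp only [mem_erase, mem_Icc] at * <;> omega

end LagrangeBlocks

theorem lagrange_body_product_general
    (k μ m n : ℕ) (hk : 2 ≤ k) (hμ : μ ≤ k - 1)
    (x : ℕ → ℂ)
    (P : ℕ → Matrix (Fin m) (Fin n) ℂ) :
    (D2LT μ m x).transpose * MmuL k μ m n x P * D1LT k μ n x = PmatL k m n x P := by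
  have hμk : μ + 1 ≤ k := by omega
  ext s t : 1
  rw [D2LT_eq_blockCol, D1LT_eq_blockCol,
    blockCol_transpose_mul_mul_blockCol_apply _ _ _ _ (MmuL_apply k μ x P · s · t),
    sum_range_sum_range_mul_mul_of_hook (by omega) (by omega) _ _ _
      fun _ _ => bodyEntry_eq_zero x _,
    range_eq_Ico, sum_eq_sum_Ico_succ_bot (by omega), zero_add, PmatL_apply,
    sum_Icc_one_eq_add_add_sum_Ico_add_sum_Ico _ hμk]
  refine congrArg₂ (· + · : ℂ[X] → ℂ[X] → ℂ[X])
    (congrArg₂ (· + ·) ?_ (sum_congr rfl fun j hj => ?_)) (sum_congr rfl fun i hi => ?_)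
  · rw [bodyEntry, if_pos ⟨rfl, rfl⟩, ← d2Block_zero_mul_gam_mul_d1Block_zero x hμk,
      ← d2Block_zero_mul_gam_succ_mul_d1Block_zero x hμk]
    ring
  · have hj0 : j ≠ 0 := by rw [mem_Ico] at hj; omega
    rw [bodyEntry, if_neg (not_and_of_not_right _ hj0), if_pos rfl,
      ← d2Block_zero_mul_gam_mul_d1Block x hj]
    ring
  · have hi0 : i ≠ 0 := by rw [mem_Ico] at hi; omega
    rw [bodyEntry, if_neg (not_and_of_not_left _ hi0), if_neg hi0, if_pos rfl,
      ← d2Block_mul_gam_mul_d1Block_last x hμk hi]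
    ring

/-- `D_2^L(λ) M_μ^L(λ) D_1^L(λ)^T = P(λ)` identically in `λ`. -/
theorem lagrange_body_product
    (k μ m n : ℕ) (hk : 2 ≤ k) (hμ : μ ≤ k - 1) (hm : 0 < m) (hn : 0 < n)
    (x : ℕ → ℂ)
    (hx : ∀ i j : ℕ, 1 ≤ i → i ≤ k + 1 → 1 ≤ j → j ≤ k + 1 → x i = x j → i = j)
    (P : ℕ → Matrix (Fin m) (Fin n) ℂ) :
    (D2LT μ m x).transpose * MmuL k μ m n x P * D1LT k μ n x = PmatL k m n x P :=
  lagrange_body_product_general k μ m n hk hμ x P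
end
end
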